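/- (Lemma 6, type D.) Let n ≥ 4, let e_1, …, e_n be the standard basis of ℤ^n, let Δ_+ = { e_a − e_b : 1 ≤ a < b ≤ n } ∪ { e_a + e_b : 1 ≤ a < b ≤ n }, let the simple roots be α_a = e_a − e_{a+1} for 1 ≤ a ≤ n−1 together with α_n = e_{n−1} + e_n, and let α_max = e_1 + e_2. Then there do not exist ξ, ζ ∈ Δ_+, a nonempty set S of simple roots, and positive integers (m_s)_{s∈S} such that α_max = ξ + ζ + Σ_{s∈S} m_s·s, ξ + ζ ∉ Δ_+, and for every s ∈ S both ξ + s ∉ Δ_+ and ζ + s ∉ Δ_+. -/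

import Mathlib

/-- The standard basis vector `e_a` of `ℤ^n`. -/
def stdBasis (n : ℕ) (a : Fin n) : Fin n → ℤ := Pi.single a 1

/-- The positive roots of type `D_n` realized in `ℤ^n`:
`Δ_+ = { e_a − e_b, e_a + e_b : a < b }`. -/
def posRootsD (n : ℕ) : Set (Fin n → ℤ) :=
  {v | ∃ a b : Fin n, a < b ∧
        (v = stdBasis n a - stdBasis n b ∨ v = stdBasis n a + stdBasis n b)}

/-- The simple roots of type `D_n`: `α_a = e_a − e_{a+1}` for `a < n`, and
`α_n = e_{n−1} + e_n`. -/
def simpleRootsD (n : ℕ) (hn : 4 ≤ n) : Set (Fin n → ℤ) :=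
  {v | (∃ a b : Fin n, (b : ℕ) = (a : ℕ) + 1 ∧ v = stdBasis n a - stdBasis n b) ∨
        v = stdBasis n ⟨n - 2, by omega⟩ + stdBasis n ⟨n - 1, by omega⟩}


/-!
The positive roots of `D_n` are exactly the vectors of `ℤ^n` of squared length `2` on which the
Weyl vector `ρ = (n - 1, …, 1, 0)` is positive. Hence two positive roots with negative inner
product add up to a positive root, so the hypotheses force `ξ ⬝ᵥ ζ ≥ 0` and `ξ ⬝ᵥ s ≥ 0` for
`s ∈ S`. Pairing the decomposition with `ξ` then gives `ξ ⬝ᵥ α_max ≥ ξ ⬝ᵥ ξ = 2 = α_max ⬝ᵥ α_max`,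
which forces `ξ = α_max`; but then `ζ + ∑ m_s s = 0`, although `ρ` is positive on it.
-/

section DotProduct

variable {ι R : Type*} [Fintype ι]

theorem eq_of_dotProduct_self_eq_of_le_dotProduct [CommRing R] [LinearOrder R]
    [IsStrictOrderedRing R] {u v : ι → R} (hself : u ⬝ᵥ u = v ⬝ᵥ v) (hle : v ⬝ᵥ v ≤ u ⬝ᵥ v) :
    u = v := by
  have hsub : (u - v) ⬝ᵥ (u - v) = u ⬝ᵥ u - 2 * u ⬝ᵥ v + v ⬝ᵥ v := by
    simp only [sub_dotProduct, dotProduct_sub, dotProduct_comm v u]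
    ring
  have hzero : (u - v) ⬝ᵥ (u - v) = 0 :=
    le_antisymm (by linarith) (Finset.sum_nonneg fun i _ => mul_self_nonneg _)
  exact sub_eq_zero.1 (dotProduct_self_eq_zero.1 hzero)

theorem dotProduct_sum_smul_nonneg [CommSemiring R] [PartialOrder R] [IsOrderedRing R]
    {κ : Type*} (u : ι → R) (S : Finset κ) (c : κ → R) (v : κ → ι → R)
    (hc : ∀ s ∈ S, 0 ≤ c s) (hv : ∀ s ∈ S, 0 ≤ u ⬝ᵥ v s) :
    0 ≤ u ⬝ᵥ ∑ s ∈ S, c s • v s := by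
  rw [dotProduct_sum]
  exact Finset.sum_nonneg fun s hs => by
    rw [dotProduct_smul, smul_eq_mul]; exact mul_nonneg (hc s hs) (hv s hs)

theorem exists_eq_single_add_single_of_dotProduct_self_eq_two [DecidableEq ι] {v : ι → ℤ}
    (hv : v ⬝ᵥ v = 2) :
    ∃ a b, a ≠ b ∧ (v a = 1 ∨ v a = -1) ∧ (v b = 1 ∨ v b = -1) ∧
      v = Pi.single a (v a) + Pi.single b (v b) := by
  have hunit : ∀ i, v i = -1 ∨ v i = 0 ∨ v i = 1 := by
    intro i
    have : v i * v i ≤ 2 :=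
      hv ▸ Finset.single_le_sum (fun j _ => mul_self_nonneg (v j)) (Finset.mem_univ i)
    have : -1 ≤ v i ∧ v i ≤ 1 := by constructor <;> nlinarith
    omega
  have hcard : (Finset.univ.filter (v · ≠ 0)).card = 2 := by
    have hsq : ∀ i, v i * v i = if v i ≠ 0 then 1 else 0 := fun i => by
      rcases hunit i with h | h | h <;> simp [h]
    rw [dotProduct, Finset.sum_congr rfl fun i _ => hsq i, Finset.sum_boole] at hv
    exact_mod_cast hv
  obtain ⟨a, b, hab, hsupp⟩ := Finset.card_eq_two.1 hcard
  have hmem : ∀ i, v i ≠ 0 ↔ i = a ∨ i = b := fun i => by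
    simpa using congrArg (i ∈ ·) hsupp
  refine ⟨a, b, hab, ?_, ?_, funext fun i => ?_⟩
  · have := (hmem a).2 (Or.inl rfl); have := hunit a; omega
  · have := (hmem b).2 (Or.inr rfl); have := hunit b; omega
  · by_cases hia : i = a
    · subst hia; simp [hab]
    by_cases hib : i = b
    · subst hib; simp [hia]
    · simpa [hia, hib] using (hmem i).not.2 (by tauto)

end DotProduct

def weylVectorD (n : ℕ) : Fin n → ℤ := fun i => (n : ℤ) - 1 - i

theorem mem_posRootsD_of_lt {n : ℕ} {a b : Fin n} (hab : a < b) {x y : ℤ}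
    (hx : x = 1 ∨ x = -1) (hy : y = 1 ∨ y = -1)
    (hρ : 0 < weylVectorD n ⬝ᵥ (Pi.single a x + Pi.single b y)) :
    Pi.single a x + Pi.single b y ∈ posRootsD n := by
  have hb : (b : ℤ) < n := by exact_mod_cast b.isLt
  have hab' : (a : ℤ) < b := by exact_mod_cast hab
  simp only [dotProduct_add, dotProduct_single, weylVectorD] at hρ
  obtain rfl : x = 1 := by rcases hx with rfl | rfl <;> rcases hy with rfl | rfl <;> linarith
  refine ⟨a, b, hab, ?_⟩
  rcases hy with rfl | rfl
  · exact Or.inr rfl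
  · exact Or.inl (by simp [stdBasis, sub_eq_add_neg, Pi.single_neg])

theorem mem_posRootsD_iff {n : ℕ} {v : Fin n → ℤ} :
    v ∈ posRootsD n ↔ v ⬝ᵥ v = 2 ∧ 0 < weylVectorD n ⬝ᵥ v := by
  constructor
  · rintro ⟨a, b, hab, hv⟩
    have hb : (b : ℤ) < n := by exact_mod_cast b.isLt
    have hab' : (a : ℤ) < b := by exact_mod_cast hab
    rcases hv with rfl | rfl
    · simp [stdBasis, dotProduct_sub, hab.ne, hab.ne', weylVectorD]
      omega
    · simp [stdBasis, dotProduct_add, hab.ne, hab.ne', weylVectorD]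
      omega
  · rintro ⟨hv, hρ⟩
    obtain ⟨a, b, hab, ha, hb, hvab⟩ := exists_eq_single_add_single_of_dotProduct_self_eq_two hv
    rw [hvab] at hρ ⊢
    rcases lt_or_gt_of_ne hab with hlt | hgt
    · exact mem_posRootsD_of_lt hlt ha hb hρ
    · rw [add_comm] at hρ ⊢
      exact mem_posRootsD_of_lt hgt hb ha hρ

theorem add_mem_posRootsD {n : ℕ} {α β : Fin n → ℤ} (hα : α ∈ posRootsD n)
    (hβ : β ∈ posRootsD n) (hneg : α ⬝ᵥ β < 0) : α + β ∈ posRootsD n := by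
  rw [mem_posRootsD_iff] at hα hβ ⊢
  have hρ : 0 < weylVectorD n ⬝ᵥ (α + β) := by rw [dotProduct_add]; linarith
  have hne : α + β ≠ 0 := fun h => by simp [h] at hρ
  have hpos : 0 < (α + β) ⬝ᵥ (α + β) :=
    lt_of_le_of_ne (Finset.sum_nonneg fun i _ => mul_self_nonneg _)
      (Ne.symm (mt dotProduct_self_eq_zero.1 hne))
  have hexp : (α + β) ⬝ᵥ (α + β) = α ⬝ᵥ α + 2 * α ⬝ᵥ β + β ⬝ᵥ β := by
    simp only [add_dotProduct, dotProduct_add, dotProduct_comm β α]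
    ring
  -- the norm `4 + 2 α ⬝ᵥ β` is positive and even, so it equals `2`
  exact ⟨by omega, hρ⟩

theorem dotProduct_nonneg_of_add_notMem_posRootsD {n : ℕ} {α β : Fin n → ℤ}
    (hα : α ∈ posRootsD n) (hβ : β ∈ posRootsD n) (hadd : α + β ∉ posRootsD n) :
    0 ≤ α ⬝ᵥ β :=
  not_lt.1 fun hneg => hadd (add_mem_posRootsD hα hβ hneg)

theorem simpleRootsD_subset_posRootsD {n : ℕ} (hn : 4 ≤ n) :
    simpleRootsD n hn ⊆ posRootsD n := by
  rintro v (⟨a, b, hab, hv⟩ | hv)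
  · exact ⟨a, b, Fin.lt_def.2 (by omega), Or.inl hv⟩
  · exact ⟨_, _, Fin.lt_def.2 (by simp only; omega), Or.inr hv⟩

theorem add_sum_smul_ne_zero_of_mem_posRootsD {n : ℕ} {ζ : Fin n → ℤ} (hζ : ζ ∈ posRootsD n)
    (S : Finset (Fin n → ℤ)) (c : (Fin n → ℤ) → ℤ) (hc : ∀ s ∈ S, 0 ≤ c s)
    (hS : ∀ s ∈ S, s ∈ posRootsD n) :
    ζ + ∑ s ∈ S, c s • s ≠ 0 := by
  have hS_nonneg : 0 ≤ weylVectorD n ⬝ᵥ ∑ s ∈ S, c s • s :=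
    dotProduct_sum_smul_nonneg _ _ _ _ hc fun s hs => (mem_posRootsD_iff.1 (hS s hs)).2.le
  have hpos : 0 < weylVectorD n ⬝ᵥ (ζ + ∑ s ∈ S, c s • s) := by
    rw [dotProduct_add]
    linarith [(mem_posRootsD_iff.1 hζ).2]
  intro h
  rw [h, dotProduct_zero] at hpos
  exact hpos.false

/-- **Lemma 6, type D.** There is no decomposition
`α_max = ξ + ζ + Σ_{s∈S} m_s·s` with `ξ, ζ ∈ Δ_+`, `S` a nonempty set of simple roots,
`m_s ≥ 1`, such that `ξ + ζ ∉ Δ_+` and `ξ + s ∉ Δ_+`, `ζ + s ∉ Δ_+` for all `s ∈ S`.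
Here `α_max = e_1 + e_2`. -/
theorem no_decomposition_typeD (n : ℕ) (hn : 4 ≤ n) :
    ¬ ∃ (ξ ζ : Fin n → ℤ) (S : Finset (Fin n → ℤ)) (m : (Fin n → ℤ) → ℕ),
        ξ ∈ posRootsD n ∧ ζ ∈ posRootsD n ∧
        S.Nonempty ∧ (↑S : Set (Fin n → ℤ)) ⊆ simpleRootsD n hn ∧ (∀ s ∈ S, 1 ≤ m s) ∧
        stdBasis n ⟨0, by omega⟩ + stdBasis n ⟨1, by omega⟩ =
          ξ + ζ + ∑ s ∈ S, (m s : ℤ) • s ∧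
        ξ + ζ ∉ posRootsD n ∧
        ∀ s ∈ S, ξ + s ∉ posRootsD n ∧ ζ + s ∉ posRootsD n := by
  rintro ⟨ξ, ζ, S, m, hξ, hζ, -, hS, -, hsum, hξζ, hξs⟩
  set αmax := stdBasis n ⟨0, by omega⟩ + stdBasis n ⟨1, by omega⟩
  have hmax : αmax ∈ posRootsD n := ⟨_, _, Fin.lt_def.2 zero_lt_one, Or.inr rfl⟩
  have hSpos : ∀ s ∈ S, s ∈ posRootsD n := fun s hs => simpleRootsD_subset_posRootsD hn (hS hs)
  have hm : ∀ s ∈ S, (0 : ℤ) ≤ m s := fun s _ => Int.natCast_nonneg _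
  have hξmax : ξ = αmax := by
    have hnorm : ξ ⬝ᵥ ξ = αmax ⬝ᵥ αmax :=
      (mem_posRootsD_iff.1 hξ).1.trans (mem_posRootsD_iff.1 hmax).1.symm
    have hξζ_nonneg := dotProduct_nonneg_of_add_notMem_posRootsD hξ hζ hξζ
    have hξS : 0 ≤ ξ ⬝ᵥ ∑ s ∈ S, (m s : ℤ) • s :=
      dotProduct_sum_smul_nonneg _ _ _ _ hm fun s hs =>
        dotProduct_nonneg_of_add_notMem_posRootsD hξ (hSpos s hs) (hξs s hs).1
    refine eq_of_dotProduct_self_eq_of_le_dotProduct hnorm ?_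
    calc αmax ⬝ᵥ αmax = ξ ⬝ᵥ ξ := hnorm.symm
      _ ≤ ξ ⬝ᵥ ξ + ξ ⬝ᵥ ζ + ξ ⬝ᵥ ∑ s ∈ S, (m s : ℤ) • s := by linarith
      _ = ξ ⬝ᵥ αmax := by rw [hsum, dotProduct_add, dotProduct_add]
  rw [hξmax, add_assoc, left_eq_add] at hsum
  exact add_sum_smul_ne_zero_of_mem_posRootsD hζ S _ hm hSpos hsum
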